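/- arXiv:2002.04791 — 4 statements merged into one kernel-verified Lean document; each statement's English description precedes it below -/
import Mathlib

section
/- Let P be a symmetric idempotent n×n real matrix, G a symmetric n×n real matrix, μ > 0 with μI + G invertible, g ∈ ℝⁿ, p_g = P g, and d = −(μI + G)⁻¹ p_g. Define the quadratic model q(x) = gᵀx + ½ xᵀG x. Then q(0) − q(P d) = ½ p_gᵀ(μI + G)⁻¹ p_g + ½ dᵀ(μI + G − Pᵀ G P) d. -/
open Matrix

/-- For a symmetric idempotent `P`, symmetric `G`, `μ > 0` with `μI + G`
invertible, `p_g = P g` and `d = -(μI + G)⁻¹ p_g`, the quadratic model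
`q(x) = gᵀx + ½ xᵀGx` satisfies
`q(0) - q(Pd) = ½ p_gᵀ(μI + G)⁻¹ p_g + ½ dᵀ(μI + G - PᵀGP) d`. -/
theorem stmt_6 {n : ℕ} (P G : Matrix (Fin n) (Fin n) ℝ)
    (hPsymm : Pᵀ = P) (hPidem : P * P = P) (hGsymm : Gᵀ = G)
    (μ : ℝ) (hμ : 0 < μ)
    (hinv : IsUnit (μ • (1 : Matrix (Fin n) (Fin n) ℝ) + G))
    (g pg d : Fin n → ℝ) (hpg : pg = P.mulVec g)
    (hd : d = -((μ • (1 : Matrix (Fin n) (Fin n) ℝ) + G)⁻¹.mulVec pg))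
    (q : (Fin n → ℝ) → ℝ)
    (hq : ∀ x, q x = g ⬝ᵥ x + (1 / 2) * (x ⬝ᵥ G.mulVec x)) :
    q 0 - q (P.mulVec d) =
      (1 / 2) * (pg ⬝ᵥ ((μ • (1 : Matrix (Fin n) (Fin n) ℝ) + G)⁻¹.mulVec pg)) +
      (1 / 2) * (d ⬝ᵥ ((μ • (1 : Matrix (Fin n) (Fin n) ℝ) + G - Pᵀ * G * P).mulVec d)) := by
  set A := μ • (1 : Matrix (Fin n) (Fin n) ℝ) + G with hA
  have hdet : IsUnit A.det := (Matrix.isUnit_iff_isUnit_det A).mp hinv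
  have hinvd : A⁻¹.mulVec pg = -d := by rw [hd]; simp
  have hAd : A.mulVec d = -pg := by
    rw [hd, Matrix.mulVec_neg, Matrix.mulVec_mulVec, Matrix.mul_nonsing_inv A hdet,
      Matrix.one_mulVec]
  -- g ⬝ P d = pg ⬝ d
  have h1 : g ⬝ᵥ P.mulVec d = pg ⬝ᵥ d := by
    rw [hpg, Matrix.dotProduct_mulVec, ← Matrix.mulVec_transpose, hPsymm]
  -- (Pd) ⬝ G (Pd) = d ⬝ (PᵀGP) d
  have h2 : P.mulVec d ⬝ᵥ G.mulVec (P.mulVec d) = d ⬝ᵥ (Pᵀ * G * P).mulVec d := by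
    rw [Matrix.mulVec_mulVec, Matrix.dotProduct_mulVec, ← Matrix.mulVec_transpose,
      Matrix.transpose_mul, hGsymm, hPsymm, Matrix.mulVec_mulVec,
      dotProduct_comm, Matrix.mul_assoc]
  have h3 : d ⬝ᵥ (A - Pᵀ * G * P).mulVec d
      = d ⬝ᵥ A.mulVec d - d ⬝ᵥ (Pᵀ * G * P).mulVec d := by
    rw [Matrix.sub_mulVec, dotProduct_sub]
  rw [hq, hq, h3, hinvd, hAd, h1, h2]
  simp [dotProduct_comm pg d]
  ring
end

section
/- Let P be a symmetric idempotent n×n real matrix, G a nonzero symmetric n×n real matrix, μ > 0 such that μI + G is positive definite and μI + G − Pᵀ G P is positive definite, g ∈ ℝⁿ, p_g = P g, d = −(μI + G)⁻¹ p_g, and q(x) = gᵀx + ½ xᵀG x. Set μ_lb = max{0, −λ_min(G − Pᵀ G P)}, where λ_min denotes the smallest eigenvalue of a symmetric matrix. Then q(0) − q(P d) ≥ ½ ( ‖p_g‖² / (μ + ‖G‖) + (μ − μ_lb)‖d‖² ), where ‖G‖ is the operator (spectral) norm of G. -/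
open Matrix

section Aux

lemma aux_dot_symm_mulVec {n : ℕ} {M : Matrix (Fin n) (Fin n) ℝ} (hM : Mᵀ = M)
    (x y : Fin n → ℝ) : x ⬝ᵥ M *ᵥ y = y ⬝ᵥ M *ᵥ x := by
  rw [Matrix.dotProduct_mulVec, ← Matrix.vecMul_transpose, hM, dotProduct_comm]

lemma aux_psd_quad {n : ℕ} {B : Matrix (Fin n) (Fin n) ℝ} (hB : B.PosSemidef)
    (x : Fin n → ℝ) : 0 ≤ x ⬝ᵥ B *ᵥ x := by simpa using hB.dotProduct_mulVec_nonneg x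

lemma aux_cs_psd {n : ℕ} {B : Matrix (Fin n) (Fin n) ℝ} (hBs : Bᵀ = B) (hB : B.PosSemidef)
    (hBd : B.PosDef) (u v : Fin n → ℝ) :
    (u ⬝ᵥ B *ᵥ v) ^ 2 ≤ (u ⬝ᵥ B *ᵥ u) * (v ⬝ᵥ B *ᵥ v) := by
  by_cases hv : v = 0
  · simp [hv, aux_psd_quad hB u]
  · set α := u ⬝ᵥ B *ᵥ u
    set β := v ⬝ᵥ B *ᵥ v with hβ
    set γ := u ⬝ᵥ B *ᵥ v with hγ
    have hβpos : 0 < β := by simpa using hBd.dotProduct_mulVec_pos hv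
    set t : ℝ := -γ / β with ht
    have hexp : (u + t • v) ⬝ᵥ B *ᵥ (u + t • v) = α + 2 * t * γ + t ^ 2 * β := by
      have hsy : v ⬝ᵥ B *ᵥ u = γ := aux_dot_symm_mulVec hBs v u
      simp only [Matrix.mulVec_add, Matrix.mulVec_smul, add_dotProduct,
        smul_dotProduct, dotProduct_add, dotProduct_smul,
        smul_eq_mul, hsy]
      ring
    have h0 := aux_psd_quad hB (u + t • v)
    rw [hexp, ht] at h0
    have h3 : (α + 2 * (-γ / β) * γ + (-γ / β) ^ 2 * β) * β = α * β - γ ^ 2 := by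
      field_simp
      ring
    have h2 : 0 ≤ α * β - γ ^ 2 := h3 ▸ mul_nonneg h0 hβpos.le
    linarith

lemma aux_shift_psd {n : ℕ} [NeZero n] {A : Matrix (Fin n) (Fin n) ℝ} (hA : A.IsHermitian) :
    (A - (⨅ i, hA.eigenvalues i) • (1 : Matrix (Fin n) (Fin n) ℝ)).PosSemidef := by
  set c := ⨅ i, hA.eigenvalues i with hc
  set U := (hA.eigenvectorUnitary : Matrix (Fin n) (Fin n) ℝ) with hU
  have hUU : U * star U = 1 := (Matrix.mem_unitaryGroup_iff).mp hA.eigenvectorUnitary.2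
  have hdiag : (Matrix.diagonal (fun i => hA.eigenvalues i - c)).PosSemidef :=
    Matrix.posSemidef_diagonal_iff.mpr fun i =>
      sub_nonneg.mpr (ciInf_le (Finite.bddBelow_range _) i)
  have h := hdiag.mul_mul_conjTranspose_same U
  have key : U * Matrix.diagonal (fun i => hA.eigenvalues i - c) * Uᴴ = A - c • 1 := by
    have hspec := hA.spectral_theorem
    simp only [Unitary.conjStarAlgAut_apply] at hspec
    rw [← hU] at hspec
    have hd : Matrix.diagonal (fun i => hA.eigenvalues i - c)
        = Matrix.diagonal (RCLike.ofReal ∘ hA.eigenvalues)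
          - c • (1 : Matrix (Fin n) (Fin n) ℝ) := by
      rw [Matrix.smul_one_eq_diagonal, ← Matrix.diagonal_sub]
      congr 1
    have h1 : U * (c • (1 : Matrix (Fin n) (Fin n) ℝ)) * Uᴴ
        = c • (1 : Matrix (Fin n) (Fin n) ℝ) := by
      rw [Matrix.mul_smul, Matrix.smul_mul, Matrix.mul_one,
        ← Matrix.star_eq_conjTranspose, hUU]
    rw [hd, Matrix.mul_sub, Matrix.sub_mul, h1, ← Matrix.star_eq_conjTranspose, ← hspec]
  rw [key] at h
  exact h

lemma aux_dot_eq_inner {n : ℕ} (x y : EuclideanSpace ℝ (Fin n)) :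
    (x : Fin n → ℝ) ⬝ᵥ (y : Fin n → ℝ) = inner ℝ x y := by
  simp [dotProduct, PiLp.inner_apply, RCLike.inner_apply, mul_comm]

lemma aux_norm_sq_eq_dot {n : ℕ} (x : EuclideanSpace ℝ (Fin n)) :
    ‖x‖ ^ 2 = (x : Fin n → ℝ) ⬝ᵥ (x : Fin n → ℝ) := by
  rw [aux_dot_eq_inner, ← real_inner_self_eq_norm_sq]

end Aux

/-- The spectral (operator) norm of a real `n × n` matrix, i.e. the operator norm of
the induced linear map on Euclidean space. -/
noncomputable def specNorm {n : ℕ} (G : Matrix (Fin n) (Fin n) ℝ) : ℝ :=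
  ‖Matrix.toEuclideanCLM (𝕜 := ℝ) G‖

lemma aux_dot_G_le {n : ℕ} (G : Matrix (Fin n) (Fin n) ℝ) (v : EuclideanSpace ℝ (Fin n)) :
    (v : Fin n → ℝ) ⬝ᵥ G *ᵥ (v : Fin n → ℝ) ≤ specNorm G * ‖v‖ ^ 2 := by
  have happ : (Matrix.toEuclideanCLM (𝕜 := ℝ) G v : Fin n → ℝ) = G.mulVec v :=
    Matrix.ofLp_toEuclideanCLM G v
  have h1 : (v : Fin n → ℝ) ⬝ᵥ G *ᵥ (v : Fin n → ℝ)
      = inner ℝ v (Matrix.toEuclideanCLM (𝕜 := ℝ) G v) := by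
    rw [← aux_dot_eq_inner, happ]
  rw [h1]
  calc inner ℝ v (Matrix.toEuclideanCLM (𝕜 := ℝ) G v)
      ≤ ‖v‖ * ‖Matrix.toEuclideanCLM (𝕜 := ℝ) G v‖ := real_inner_le_norm _ _
    _ ≤ ‖v‖ * (specNorm G * ‖v‖) :=
        mul_le_mul_of_nonneg_left ((Matrix.toEuclideanCLM (𝕜 := ℝ) G).le_opNorm v)
          (norm_nonneg v)
    _ = specNorm G * ‖v‖ ^ 2 := by ring

/-- Intermediate lower bound on the predicted reduction: with `P` symmetric
idempotent, `G ≠ 0` symmetric, `μ > 0` with `μI + G ≻ 0` and `μI + G - PᵀGP ≻ 0`,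
`p_g = Pg`, `d = -(μI + G)⁻¹p_g`, `q(x) = gᵀx + ½xᵀGx` and
`μ_lb = max{0, -λ_min(G - PᵀGP)}`, one has
`q(0) - q(Pd) ≥ ½(‖p_g‖²/(μ + ‖G‖) + (μ - μ_lb)‖d‖²)`. -/
theorem stmt_7 {n : ℕ} (P G : Matrix (Fin n) (Fin n) ℝ)
    (hPsymm : Pᵀ = P) (hPidem : P * P = P) (hGsymm : Gᵀ = G) (hG0 : G ≠ 0)
    (μ : ℝ) (hμ : 0 < μ)
    (hpd1 : (μ • (1 : Matrix (Fin n) (Fin n) ℝ) + G).PosDef)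
    (hpd2 : (μ • (1 : Matrix (Fin n) (Fin n) ℝ) + G - Pᵀ * G * P).PosDef)
    (g pg d : EuclideanSpace ℝ (Fin n)) (hpg : pg = P.mulVec g)
    (hd : d = -((μ • (1 : Matrix (Fin n) (Fin n) ℝ) + G)⁻¹.mulVec pg))
    (q : (Fin n → ℝ) → ℝ)
    (hq : ∀ x, q x = g ⬝ᵥ x + (1 / 2) * (x ⬝ᵥ G.mulVec x))
    (hH : (G - Pᵀ * G * P).IsHermitian)
    (μlb : ℝ) (hμlb : μlb = max 0 (-(⨅ i, hH.eigenvalues i))) :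
    q 0 - q (P.mulVec d) ≥
      (1 / 2) * (‖pg‖ ^ 2 / (μ + specNorm G) + (μ - μlb) * ‖d‖ ^ 2) := by
  rcases Nat.eq_zero_or_pos n with hn | hn
  · subst hn
    have hPd : P.mulVec d = (0 : Fin 0 → ℝ) := funext fun i => i.elim0
    have hpg0 : ‖pg‖ = 0 := by
      rw [norm_eq_zero]
      ext i; exact i.elim0
    have hd0 : ‖d‖ = 0 := by
      rw [norm_eq_zero]
      ext i; exact i.elim0
    rw [hPd]
    norm_num [hpg0, hd0]
  haveI : NeZero n := ⟨hn.ne'⟩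
  set B := μ • (1 : Matrix (Fin n) (Fin n) ℝ) + G with hB
  have hBsymm : Bᵀ = B := by
    rw [hB, Matrix.transpose_add, Matrix.transpose_smul, Matrix.transpose_one, hGsymm]
  have hBps : B.PosSemidef := hpd1.posSemidef
  have hdet : IsUnit B.det := hpd1.det_pos.ne'.isUnit
  have hBd : B.mulVec d = -pg := by
    rw [hd, Matrix.mulVec_neg, Matrix.mulVec_mulVec, Matrix.mul_nonsing_inv _ hdet,
      Matrix.one_mulVec]
  set s := specNorm G with hs
  have hs0 : 0 ≤ s := norm_nonneg _
  have hμs : 0 < μ + s := by linarith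
  set a := (d : Fin n → ℝ) ⬝ᵥ (d : Fin n → ℝ) with ha
  set bG := (d : Fin n → ℝ) ⬝ᵥ G *ᵥ (d : Fin n → ℝ) with hbG
  set cc := (d : Fin n → ℝ) ⬝ᵥ (Pᵀ * G * P) *ᵥ (d : Fin n → ℝ) with hcc
  have hand : ‖d‖ ^ 2 = a := aux_norm_sq_eq_dot d
  have hanp : ‖pg‖ ^ 2 = (pg : Fin n → ℝ) ⬝ᵥ (pg : Fin n → ℝ) := aux_norm_sq_eq_dot pg
  have ha0 : 0 ≤ a := by rw [← hand]; positivity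
  -- B-quadratic form in d
  have hBquad : (d : Fin n → ℝ) ⬝ᵥ B *ᵥ (d : Fin n → ℝ) = μ * a + bG := by
    rw [hB, Matrix.add_mulVec, Matrix.smul_mulVec, Matrix.one_mulVec,
      dotProduct_add, dotProduct_smul, smul_eq_mul]
  -- value of the reduction
  have hq0 : q 0 = 0 := by simp [hq]
  have hqPd : q (P.mulVec d) = -(μ * a + bG) + (1 / 2) * cc := by
    rw [hq]
    have h1 : g ⬝ᵥ (P *ᵥ (d : Fin n → ℝ)) = pg ⬝ᵥ (d : Fin n → ℝ) := by
      rw [aux_dot_symm_mulVec hPsymm g d, hpg, dotProduct_comm]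
    have h2 : (pg : Fin n → ℝ) ⬝ᵥ (d : Fin n → ℝ) = -(μ * a + bG) := by
      have : (pg : Fin n → ℝ) = -(B *ᵥ (d : Fin n → ℝ)) := by rw [hBd]; simp
      rw [this, neg_dotProduct, dotProduct_comm, hBquad]
    have h3 : (P *ᵥ (d : Fin n → ℝ)) ⬝ᵥ G *ᵥ (P *ᵥ (d : Fin n → ℝ)) = cc := by
      rw [hcc, ← Matrix.mulVec_mulVec, ← Matrix.mulVec_mulVec,
        Matrix.dotProduct_mulVec _ Pᵀ, Matrix.vecMul_transpose]
    rw [h1, h2, h3]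
  -- fact 1 : bG - cc ≥ -μlb * a
  have hF1 : -μlb * a ≤ bG - cc := by
    set cmin := ⨅ i, hH.eigenvalues i with hcmin
    have hpsd := aux_shift_psd hH
    have h := aux_psd_quad hpsd (d : Fin n → ℝ)
    have hexp : (d : Fin n → ℝ) ⬝ᵥ ((G - Pᵀ * G * P) - cmin • 1) *ᵥ (d : Fin n → ℝ)
        = bG - cc - cmin * a := by
      rw [Matrix.sub_mulVec, Matrix.sub_mulVec, Matrix.smul_mulVec, Matrix.one_mulVec,
        dotProduct_sub, dotProduct_sub, dotProduct_smul, smul_eq_mul]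
    rw [hexp] at h
    have hμlb1 : -cmin ≤ μlb := by rw [hμlb]; exact le_max_right _ _
    nlinarith [mul_le_mul_of_nonneg_right hμlb1 ha0]
  -- fact 2 : ‖pg‖² ≤ (μ + s) * (μ * a + bG)
  have htnn : 0 ≤ μ * a + bG := by rw [← hBquad]; exact aux_psd_quad hBps d
  have hF2 : ‖pg‖ ^ 2 ≤ (μ + s) * (μ * a + bG) := by
    by_cases hpg0 : (pg : EuclideanSpace ℝ (Fin n)) = 0
    · rw [hpg0]
      simpa using mul_nonneg hμs.le htnn
    · have hnpg : 0 < ‖pg‖ ^ 2 := by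
        have := norm_pos_iff.mpr hpg0
        positivity
      have hcs := aux_cs_psd hBsymm hBps hpd1 pg d
      have hpgBd : (pg : Fin n → ℝ) ⬝ᵥ B *ᵥ (d : Fin n → ℝ) = -‖pg‖ ^ 2 := by
        rw [hBd, hanp]
        exact dotProduct_neg pg pg
      rw [hpgBd, hBquad] at hcs
      have hBpg : (pg : Fin n → ℝ) ⬝ᵥ B *ᵥ (pg : Fin n → ℝ) ≤ (μ + s) * ‖pg‖ ^ 2 := by
        have h1 : (pg : Fin n → ℝ) ⬝ᵥ B *ᵥ (pg : Fin n → ℝ)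
            = μ * (‖pg‖ ^ 2) + (pg : Fin n → ℝ) ⬝ᵥ G *ᵥ (pg : Fin n → ℝ) := by
          rw [hB, Matrix.add_mulVec, Matrix.smul_mulVec, Matrix.one_mulVec,
            dotProduct_add, dotProduct_smul, smul_eq_mul, hanp]
        have h2 := aux_dot_G_le G pg
        rw [h1]; nlinarith
      have h5 : ‖pg‖ ^ 2 * ‖pg‖ ^ 2 ≤ ‖pg‖ ^ 2 * ((μ + s) * (μ * a + bG)) := by
        calc ‖pg‖ ^ 2 * ‖pg‖ ^ 2 = (-‖pg‖ ^ 2) ^ 2 := by ring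
          _ ≤ ((pg : Fin n → ℝ) ⬝ᵥ B *ᵥ (pg : Fin n → ℝ)) * (μ * a + bG) := hcs
          _ ≤ ((μ + s) * ‖pg‖ ^ 2) * (μ * a + bG) :=
              mul_le_mul_of_nonneg_right hBpg htnn
          _ = ‖pg‖ ^ 2 * ((μ + s) * (μ * a + bG)) := by ring
      exact le_of_mul_le_mul_left h5 hnpg
  -- conclude
  have hdiv : ‖pg‖ ^ 2 / (μ + s) ≤ μ * a + bG := (div_le_iff₀ hμs).mpr (by linarith [hF2])
  rw [hq0, hqPd, hand]
  linarith
end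

section
/- Let f : ℝⁿ → ℝ be twice continuously differentiable, s ∈ ℝⁿ, u ∈ ℝⁿ (the projected step u = P d_k), g = ∇f(s), G = ∇²f(s), and q(x) = gᵀx + ½ xᵀG x. Let M_G > 0 satisfy ‖G‖ ≤ M_G and ‖∇²f(z)‖ ≤ M_G for every z on the segment [s, s + u], and let δ > 0 satisfy ‖p‖ ≥ δ for a vector p with Pred := q(0) − q(u) ≥ ½ ‖p‖ · min{ ‖u‖, ‖p‖ / ‖G‖ } > 0. Then the measurement ratio ρ = ( f(s) − f(s + u) ) / Pred satisfies |ρ − 1| ≤ M_G ‖u‖² / Pred ≤ 2 M_G ‖u‖² / ( δ · min{ ‖u‖, δ / M_G } ). -/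
open Matrix intervalIntegral RealInnerProductSpace

lemma taylor_aux {n : ℕ} (f : EuclideanSpace ℝ (Fin n) → ℝ) (hf : ContDiff ℝ 2 f)
    (s u : EuclideanSpace ℝ (Fin n)) (MG : ℝ) (hMG : 0 ≤ MG)
    (hHess : ∀ z ∈ segment ℝ s (s + u), ‖fderiv ℝ (gradient f) z‖ ≤ MG) :
    |f (s + u) - f s - ⟪gradient f s, u⟫| ≤ MG / 2 * ‖u‖ ^ 2 := by
  have hdiff : Differentiable ℝ f := hf.differentiable (by norm_num)
  -- gradient is differentiable
  have hfd1 : ContDiff ℝ 1 (fderiv ℝ f) := by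
    have := (contDiff_succ_iff_fderiv (n := 1)).mp (by exact_mod_cast hf)
    exact this.2.2
  have hgrad_eq : gradient f = fun x => (InnerProductSpace.toDual ℝ _).symm (fderiv ℝ f x) := rfl
  have hgdiff : Differentiable ℝ (gradient f) := by
    rw [hgrad_eq]
    exact (InnerProductSpace.toDual ℝ _).symm.toContinuousLinearEquiv.differentiable.comp
      (hfd1.differentiable (by norm_num))
  have hgc : Continuous (gradient f) := hgdiff.continuous
  -- Lipschitz-type bound on the segment
  have hlip : ∀ z ∈ segment ℝ s (s + u), ‖gradient f z - gradient f s‖ ≤ MG * ‖z - s‖ := by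
    intro z hz
    exact (convex_segment s (s + u)).norm_image_sub_le_of_norm_fderiv_le
      (fun x _ => hgdiff x) hHess (left_mem_segment ℝ s (s + u)) hz
  -- the 1D functions
  set g0 : ℝ := ⟪gradient f s, u⟫ with hg0
  have hline : ∀ t : ℝ, HasDerivAt (fun t : ℝ => s + t • u) u t := by
    intro t
    simpa using ((hasDerivAt_id t).smul_const u).const_add s
  have hφ : ∀ t : ℝ, HasDerivAt (fun t : ℝ => f (s + t • u)) ⟪gradient f (s + t • u), u⟫ t := by
    intro t
    have h1 := ((hdiff (s + t • u)).hasGradientAt.hasFDerivAt).comp_hasDerivAt t (hline t)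
    simpa [InnerProductSpace.toDual_apply_apply, Function.comp_def] using h1
  have hψ : ∀ t : ℝ, HasDerivAt (fun t : ℝ => f (s + t • u) - t * g0)
      (⟪gradient f (s + t • u), u⟫ - g0) t := by
    intro t
    simpa [Pi.sub_def] using (hφ t).sub ((hasDerivAt_id t).mul_const g0)
  -- FTC
  have hcont : Continuous (fun t : ℝ => ⟪gradient f (s + t • u), u⟫ - g0) :=
    ((hgc.comp (continuous_const.add (continuous_id.smul continuous_const))).inner
      continuous_const).sub continuous_const
  have hFTC : (∫ t in (0:ℝ)..1, (⟪gradient f (s + t • u), u⟫ - g0))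
      = (f (s + u) - 1 * g0) - (f (s + 0 • u) - 0 * g0) := by
    have := integral_eq_sub_of_hasDerivAt (f := fun t : ℝ => f (s + t • u) - t * g0)
      (f' := fun t : ℝ => ⟪gradient f (s + t • u), u⟫ - g0)
      (a := 0) (b := 1) (fun t _ => hψ t) (hcont.intervalIntegrable 0 1)
    simpa using this
  have hmem : ∀ t ∈ Set.uIoc (0:ℝ) 1, s + t • u ∈ segment ℝ s (s + u) := by
    intro t ht
    rw [Set.uIoc_of_le (by norm_num)] at ht
    refine ⟨1 - t, t, by linarith [ht.2], le_of_lt ht.1, by ring, by module⟩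
  have hbound : ∀ t ∈ Set.uIoc (0:ℝ) 1,
      ‖⟪gradient f (s + t • u), u⟫ - g0‖ ≤ MG * ‖u‖ ^ 2 * t := by
    intro t ht
    have ht' := ht
    rw [Set.uIoc_of_le (by norm_num)] at ht'
    have h1 : ⟪gradient f (s + t • u), u⟫ - g0 = ⟪gradient f (s + t • u) - gradient f s, u⟫ := by
      rw [hg0, inner_sub_left]
    rw [h1]
    calc ‖⟪gradient f (s + t • u) - gradient f s, u⟫‖
        ≤ ‖gradient f (s + t • u) - gradient f s‖ * ‖u‖ := norm_inner_le_norm _ _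
      _ ≤ (MG * ‖s + t • u - s‖) * ‖u‖ := by
          have := hlip _ (hmem t ht)
          exact mul_le_mul_of_nonneg_right this (norm_nonneg _)
      _ = MG * ‖u‖ ^ 2 * t := by
          have : s + t • u - s = t • u := by module
          rw [this, norm_smul, Real.norm_eq_abs, abs_of_pos ht'.1]
          ring
  have hInt : ‖∫ t in (0:ℝ)..1, (⟪gradient f (s + t • u), u⟫ - g0)‖
      ≤ |∫ t in (0:ℝ)..1, MG * ‖u‖ ^ 2 * t| := by
    apply norm_integral_le_abs_of_norm_le
    · exact (MeasureTheory.ae_restrict_iff' measurableSet_uIoc).mpr (Filter.Eventually.of_forall hbound)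
    · exact ((continuous_const.mul continuous_id).intervalIntegrable 0 1)
  have hval : (∫ t in (0:ℝ)..1, MG * ‖u‖ ^ 2 * t) = MG / 2 * ‖u‖ ^ 2 := by
    rw [intervalIntegral.integral_const_mul, integral_id]
    ring
  rw [hFTC, hval, abs_of_nonneg (by positivity)] at hInt
  have h2 : f (s + u) - 1 * g0 - (f (s + 0 • u) - 0 * g0) = f (s + u) - f s - g0 := by
    simp only [one_mul, zero_smul, add_zero, zero_mul, sub_zero]; ring
  rw [h2] at hInt
  calc |f (s + u) - f s - g0| = ‖f (s + u) - f s - g0‖ := (Real.norm_eq_abs _).symm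
    _ ≤ MG / 2 * ‖u‖ ^ 2 := hInt

lemma inner_eq_dot {n : ℕ} (a b : EuclideanSpace ℝ (Fin n)) : ⟪a, b⟫ = a ⬝ᵥ b := by
  simp [PiLp.inner_apply, RCLike.inner_apply, dotProduct]
  exact Finset.sum_congr rfl fun _ _ => mul_comm _ _

lemma quad_bound {n : ℕ} (G : Matrix (Fin n) (Fin n) ℝ) (u : EuclideanSpace ℝ (Fin n)) :
    |u ⬝ᵥ G.mulVec u| ≤ specNorm G * ‖u‖ ^ 2 := by
  have h1 : u ⬝ᵥ G.mulVec u = ⟪u, (Matrix.toEuclideanCLM (𝕜 := ℝ) G) u⟫ := by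
    simp [PiLp.inner_apply, RCLike.inner_apply, dotProduct]
    exact Finset.sum_congr rfl fun _ _ => mul_comm _ _
  rw [h1]
  calc |⟪u, (Matrix.toEuclideanCLM (𝕜 := ℝ) G) u⟫|
      ≤ ‖u‖ * ‖(Matrix.toEuclideanCLM (𝕜 := ℝ) G) u‖ := abs_real_inner_le_norm _ _
    _ ≤ ‖u‖ * (‖Matrix.toEuclideanCLM (𝕜 := ℝ) G‖ * ‖u‖) := by
        gcongr
        exact (Matrix.toEuclideanCLM (𝕜 := ℝ) G).le_opNorm u
    _ = specNorm G * ‖u‖ ^ 2 := by rw [specNorm]; ring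

/-- Bound on the trust-region measurement ratio. With `g = ∇f(s)`,
`G = ∇²f(s)`, `q(x) = gᵀx + ½xᵀGx`, `‖G‖ ≤ M_G` and `‖∇²f(z)‖ ≤ M_G` on the segment
`[s, s + u]`, `‖p‖ ≥ δ > 0` and `Pred = q(0) - q(u) ≥ ½‖p‖·min{‖u‖, ‖p‖/‖G‖} > 0`,
the ratio `ρ = (f(s) - f(s + u))/Pred` satisfies
`|ρ - 1| ≤ M_G‖u‖²/Pred ≤ 2M_G‖u‖²/(δ·min{‖u‖, δ/M_G})`. -/
theorem stmt_11 {n : ℕ} (f : EuclideanSpace ℝ (Fin n) → ℝ) (hf : ContDiff ℝ 2 f)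
    (s u : EuclideanSpace ℝ (Fin n))
    (g : EuclideanSpace ℝ (Fin n)) (hg : g = gradient f s)
    (G : Matrix (Fin n) (Fin n) ℝ)
    (hG : HasFDerivAt (gradient f) (Matrix.toEuclideanCLM (𝕜 := ℝ) G : _) s)
    (MG : ℝ) (hMG : 0 < MG) (hGbd : specNorm G ≤ MG)
    (hHessBd : ∀ z ∈ segment ℝ s (s + u), ‖fderiv ℝ (gradient f) z‖ ≤ MG)
    (q : EuclideanSpace ℝ (Fin n) → ℝ)
    (hq : ∀ x : EuclideanSpace ℝ (Fin n),
      q x = g ⬝ᵥ x + (1 / 2) * (x ⬝ᵥ G.mulVec x))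
    (p : EuclideanSpace ℝ (Fin n)) (δ : ℝ) (hδ : 0 < δ) (hpδ : δ ≤ ‖p‖)
    (Pred : ℝ) (hPred : Pred = q 0 - q u)
    (hlow : Pred ≥ (1 / 2) * ‖p‖ * min ‖u‖ (‖p‖ / specNorm G))
    (hpos : 0 < (1 / 2) * ‖p‖ * min ‖u‖ (‖p‖ / specNorm G))
    (ρ : ℝ) (hρ : ρ = (f s - f (s + u)) / Pred) :
    |ρ - 1| ≤ MG * ‖u‖ ^ 2 / Pred ∧
    MG * ‖u‖ ^ 2 / Pred ≤ 2 * MG * ‖u‖ ^ 2 / (δ * min ‖u‖ (δ / MG)) := by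
  have hPredPos : 0 < Pred := lt_of_lt_of_le hpos hlow
  have hp0 : 0 < ‖p‖ := lt_of_lt_of_le hδ hpδ
  have hmin : 0 < min ‖u‖ (‖p‖ / specNorm G) := by
    by_contra h
    push_neg at h
    nlinarith [hpos]
  have hu0 : 0 < ‖u‖ := hmin.trans_le (min_le_left _ _)
  have hG0 : 0 < specNorm G := by
    by_contra h
    push_neg at h
    have h0 : specNorm G = 0 := le_antisymm h (norm_nonneg _)
    have := hmin.trans_le (min_le_right _ _)
    rw [h0, div_zero] at this
    exact lt_irrefl 0 this
  -- Pred formula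
  have hq0 : q 0 = 0 := by
    have h00 : ((0 : EuclideanSpace ℝ (Fin n)) : Fin n → ℝ) = 0 := rfl
    rw [hq]
    simp [h00]
  have hPredEq : Pred = -(g ⬝ᵥ (u : Fin n → ℝ)) - (1 / 2) * (u ⬝ᵥ G.mulVec u) := by
    rw [hPred, hq0, hq]; ring
  -- Taylor bound
  have htay := taylor_aux f hf s u MG hMG.le hHessBd
  rw [← hg, inner_eq_dot] at htay
  -- numerator bound
  have hnum : |f s - f (s + u) - Pred| ≤ MG * ‖u‖ ^ 2 := by
    have hQ := quad_bound G u
    have hexpr : f s - f (s + u) - Pred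
        = -(f (s + u) - f s - g ⬝ᵥ (u : Fin n → ℝ)) + (1 / 2) * (u ⬝ᵥ G.mulVec u) := by
      rw [hPredEq]; ring
    rw [hexpr]
    have h1 := abs_add_le (-(f (s + u) - f s - g ⬝ᵥ (u : Fin n → ℝ))) ((1 / 2) * (u ⬝ᵥ G.mulVec u))
    rw [abs_neg, abs_mul] at h1
    have h2 : |(1 : ℝ) / 2| = 1 / 2 := by norm_num
    rw [h2] at h1
    have h3 : specNorm G * ‖u‖ ^ 2 ≤ MG * ‖u‖ ^ 2 := by gcongr
    calc |-(f (s + u) - f s - g ⬝ᵥ (u : Fin n → ℝ)) + (1 / 2) * (u ⬝ᵥ G.mulVec u)|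
        ≤ |f (s + u) - f s - g ⬝ᵥ (u : Fin n → ℝ)| + (1 / 2) * |u ⬝ᵥ G.mulVec u| := h1
      _ ≤ MG / 2 * ‖u‖ ^ 2 + (1 / 2) * (MG * ‖u‖ ^ 2) := by
          gcongr
          exact hQ.trans h3
      _ = MG * ‖u‖ ^ 2 := by ring
  constructor
  · rw [hρ, div_sub_one hPredPos.ne', abs_div, abs_of_pos hPredPos]
    gcongr
  · have hcmp : δ / MG ≤ ‖p‖ / specNorm G := div_le_div₀ (norm_nonneg p) hpδ hG0 hGbd
    have hminpos : 0 < min ‖u‖ (δ / MG) := lt_min hu0 (div_pos hδ hMG)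
    have hPredlow : (1 / 2) * (δ * min ‖u‖ (δ / MG)) ≤ Pred := by
      have h1 : min ‖u‖ (δ / MG) ≤ min ‖u‖ (‖p‖ / specNorm G) := min_le_min le_rfl hcmp
      nlinarith [hlow, hminpos.le]
    calc MG * ‖u‖ ^ 2 / Pred
        ≤ MG * ‖u‖ ^ 2 / ((1 / 2) * (δ * min ‖u‖ (δ / MG))) := by
          gcongr
        _ = 2 * MG * ‖u‖ ^ 2 / (δ * min ‖u‖ (δ / MG)) := by
          rw [div_eq_div_iff (by positivity) (by positivity)]
          ring
end

section
/- (Lemma 2 of the paper, time-stepping lower bound.) Fix constants 0 < η_a < η₁ ≤ 1/2 < η₂ < 1 and 0 < γ₂ < 1 < γ₁, and constants 0 < δ ≤ M_p and M_G > 0. Let f : ℝⁿ → ℝ be twice continuously differentiable with ‖∇²f(x)‖ ≤ M_G for all x, let A be an m×n real matrix with full row rank, b ∈ ℝᵐ, P = I − Aᵀ(A·Aᵀ)⁻¹A, and let (s_k)ₖ in {s : A s = b} and (Δt_k)ₖ in (0, ∞) be sequences satisfying, with g_k = ∇f(s_k), G_k = ∇²f(s_k), p_{g_k} = P g_k: (i)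 δ ≤ ‖p_{g_k}‖ ≤ M_p for all k; (ii) whenever (1/Δt_k)I + G_k and (1/Δt_k)I + G_k − Pᵀ G_k P are both positive definite, the step d_k solves ((1/Δt_k)I + G_k) d_k = −p_{g_k} and ρ_k = ( f(s_k) − f(s_k + P d_k) ) / ( q_k(s_k) − q_k(s_k + P d_k) ), where q_k(s) = (s − s_k)ᵀ g_k + ½ (s − s_k)ᵀ G_k (s − s_k); otherwise ρ_k = −1; (iii) Δt_{k+1} = γ₁ Δt_k if |1 − ρ_k| ≤ η₁, Δt_{k+1} = Δt_k if η₁ < |1 − ρ_k| < η₂, and Δt_{k+1} = γ₂ Δt_k if |1 − ρ_k| ≥ η₂. Then there exists δ_Δt > 0 such that Δt_k ≥ δ_Δt for all k. -/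
open Matrix

/-- Identification of `Fin n → ℝ` with Euclidean space `ℝⁿ` (the identity map). -/
def toE {n : ℕ} (x : Fin n → ℝ) : EuclideanSpace ℝ (Fin n) := WithLp.toLp 2 x

/-- The inverse identification (the identity map). -/
def toPi {n : ℕ} (x : EuclideanSpace ℝ (Fin n)) : Fin n → ℝ := x

section Aux
open RealInnerProductSpace InnerProductSpace
variable {n : ℕ}
local notation "E" => EuclideanSpace ℝ (Fin n)

lemma dot_eq_inner (x y : Fin n → ℝ) : x ⬝ᵥ y = ⟪toE x, toE y⟫ := by
  simp [dotProduct, PiLp.inner_apply, RCLike.inner_apply, toE, mul_comm]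

lemma euclid_norm_sq (x : Fin n → ℝ) : x ⬝ᵥ x = ‖toE x‖ ^ 2 := by
  rw [dot_eq_inner]; exact real_inner_self_eq_norm_sq _

lemma clm_mulVec (M : Matrix (Fin n) (Fin n) ℝ) (x : Fin n → ℝ) :
    (Matrix.toEuclideanCLM (𝕜 := ℝ) M : E →L[ℝ] E) (toE x) = toE (M.mulVec x) :=
  Matrix.toEuclideanCLM_toLp M x

lemma quad_bound_s12 {M : Matrix (Fin n) (Fin n) ℝ} {C : ℝ}
    (hM : ‖(Matrix.toEuclideanCLM (𝕜 := ℝ) M : E →L[ℝ] E)‖ ≤ C) (x : Fin n → ℝ) :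
    |x ⬝ᵥ M.mulVec x| ≤ C * ‖toE x‖ ^ 2 := by
  set T := (Matrix.toEuclideanCLM (𝕜 := ℝ) M : E →L[ℝ] E)
  have h1 : x ⬝ᵥ M.mulVec x = ⟪toE x, T (toE x)⟫ := by
    rw [dot_eq_inner, clm_mulVec]
  have h2 : |⟪toE x, T (toE x)⟫| ≤ ‖toE x‖ * ‖T (toE x)‖ := abs_real_inner_le_norm _ _
  have h3 : ‖T (toE x)‖ ≤ C * ‖toE x‖ := (T.le_opNorm _).trans (by gcongr)
  rw [h1]
  calc |⟪toE x, T (toE x)⟫| ≤ ‖toE x‖ * ‖T (toE x)‖ := h2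
    _ ≤ ‖toE x‖ * (C * ‖toE x‖) := mul_le_mul_of_nonneg_left h3 (norm_nonneg _)
    _ = C * ‖toE x‖ ^ 2 := by ring

lemma proj_norm_le {P : Matrix (Fin n) (Fin n) ℝ} (hPt : Pᵀ = P) (hPP : P * P = P)
    (x : Fin n → ℝ) : ‖toE (P.mulVec x)‖ ≤ ‖toE x‖ := by
  set u := P.mulVec x with hu
  have hvm : u ᵥ* P = u := by
    rw [← hPt, vecMul_transpose, hu, mulVec_mulVec, hPP]
  have h1 : u ⬝ᵥ u = u ⬝ᵥ x := by
    conv_lhs => rw [hu, dotProduct_mulVec, hvm]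
  have h2 : ‖toE u‖ ^ 2 ≤ ‖toE u‖ * ‖toE x‖ := by
    rw [← euclid_norm_sq, h1, dot_eq_inner]
    exact real_inner_le_norm _ _
  rcases eq_or_lt_of_le (norm_nonneg (toE u)) with h | h
  · rw [← h]; exact norm_nonneg _
  · nlinarith

lemma toDual_grad (f : E → ℝ) (x : E) :
    (toDual ℝ E) (gradient f x) = fderiv ℝ f x := by
  rw [gradient]; exact (toDual ℝ E).apply_symm_apply _

lemma grad_differentiable {f : E → ℝ} (hf : ContDiff ℝ 2 f) :
    Differentiable ℝ (gradient f) := by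
  have h0 : gradient f = (⇑(toDual ℝ E).symm) ∘ (fderiv ℝ f) := rfl
  rw [h0]
  have h1 : Differentiable ℝ (fderiv ℝ f) :=
    (hf.fderiv_right (m := 1) (by norm_num)).differentiable one_ne_zero
  exact (toDual ℝ E).symm.toContinuousLinearEquiv.differentiable.comp h1

lemma grad_lip {f : E → ℝ} {L : ℝ} (hL : 0 ≤ L) (hf : ContDiff ℝ 2 f)
    (hHess : ∀ x : E, ‖fderiv ℝ (gradient f) x‖ ≤ L) :
    LipschitzWith ⟨L, hL⟩ (gradient f) := by
  apply lipschitzWith_of_nnnorm_fderiv_le (grad_differentiable hf)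
  intro x
  have := hHess x
  change ‖fderiv ℝ (gradient f) x‖ ≤ L
  exact this

lemma taylor_bound {f : E → ℝ} {L : ℝ} (hL : 0 ≤ L) (hf : ContDiff ℝ 2 f)
    (hHess : ∀ x : E, ‖fderiv ℝ (gradient f) x‖ ≤ L) (x h : E) :
    |f (x + h) - f x - ⟪gradient f x, h⟫| ≤ L * ‖h‖ ^ 2 := by
  have hlip := grad_lip hL hf hHess
  have hdiff : Differentiable ℝ f := hf.differentiable two_ne_zero
  have hbound : ∀ z ∈ Metric.closedBall x ‖h‖,
      ‖fderiv ℝ f z - fderiv ℝ f x‖ ≤ L * ‖h‖ := by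
    intro z hz
    have h1 : fderiv ℝ f z - fderiv ℝ f x
        = (toDual ℝ E) (gradient f z - gradient f x) := by
      rw [map_sub, toDual_grad, toDual_grad]
    rw [h1, LinearIsometryEquiv.norm_map]
    have h2 := hlip.dist_le_mul z x
    rw [dist_eq_norm] at h2
    have h4 : dist z x ≤ ‖h‖ := Metric.mem_closedBall.mp hz
    calc ‖gradient f z - gradient f x‖ ≤ L * dist z x := h2
      _ ≤ L * ‖h‖ := mul_le_mul_of_nonneg_left h4 hL
  have key := Convex.norm_image_sub_le_of_norm_fderiv_le'
    (f := f) (φ := fderiv ℝ f x) (C := L * ‖h‖) (s := Metric.closedBall x ‖h‖)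
    (x := x) (y := x + h)
    (fun z _ => hdiff.differentiableAt) hbound
    (convex_closedBall _ _) (Metric.mem_closedBall_self (norm_nonneg h))
    (by rw [Metric.mem_closedBall, dist_self_add_left])
  have h3 : (fderiv ℝ f x) (x + h - x) = ⟪gradient f x, h⟫ := by
    rw [add_sub_cancel_left, ← toDual_grad, toDual_apply_apply]
  rw [h3] at key
  rw [← Real.norm_eq_abs]
  calc ‖f (x + h) - f x - ⟪gradient f x, h⟫‖ ≤ L * ‖h‖ * ‖x + h - x‖ := key
    _ = L * ‖h‖ ^ 2 := by rw [add_sub_cancel_left]; ring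

lemma hess_symm {f : E → ℝ} (hf : ContDiff ℝ 2 f) {M : Matrix (Fin n) (Fin n) ℝ} {x : E}
    (hM : HasFDerivAt (gradient f) (Matrix.toEuclideanCLM (𝕜 := ℝ) M : E →L[ℝ] E) x) :
    M.IsHermitian := by
  have hsnd : IsSymmSndFDerivAt ℝ f x :=
    (hf.contDiffAt).isSymmSndFDerivAt (by simp)
  have hdf : DifferentiableAt ℝ (fderiv ℝ f) x :=
    ((hf.fderiv_right (m := 1) (by norm_num)).differentiable one_ne_zero) x
  have hf'' : HasFDerivAt (fderiv ℝ f) (fderiv ℝ (fderiv ℝ f) x) x := hdf.hasFDerivAt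
  set T := (Matrix.toEuclideanCLM (𝕜 := ℝ) M : E →L[ℝ] E)
  have hkey : ∀ u v : E, ⟪v, T u⟫ = fderiv ℝ (fderiv ℝ f) x u v := by
    intro u v
    have h1 : HasFDerivAt (fun y => (innerSL ℝ v) (gradient f y))
        ((innerSL ℝ v).comp T) x := (innerSL ℝ v).hasFDerivAt.comp x hM
    have h2 : HasFDerivAt (fun y => (ContinuousLinearMap.apply ℝ ℝ v) (fderiv ℝ f y))
        ((ContinuousLinearMap.apply ℝ ℝ v).comp (fderiv ℝ (fderiv ℝ f) x)) x :=
      (ContinuousLinearMap.apply ℝ ℝ v).hasFDerivAt.comp x hf''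
    have hfun : (fun y => (innerSL ℝ v) (gradient f y))
        = (fun y => (ContinuousLinearMap.apply ℝ ℝ v) (fderiv ℝ f y)) := by
      funext y
      simp only [innerSL_apply_apply, ContinuousLinearMap.apply_apply]
      rw [real_inner_comm, ← toDual_grad f y, toDual_apply_apply]
    rw [hfun] at h1
    have := h1.unique h2
    have happ := congrFun (congrArg (fun (L : E →L[ℝ] ℝ) => (L : E → ℝ)) this) u
    simpa using happ
  have hinner : ∀ u v : E, ⟪T u, v⟫ = ⟪T v, u⟫ := by
    intro u v
    calc ⟪T u, v⟫ = ⟪v, T u⟫ := real_inner_comm _ _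
      _ = fderiv ℝ (fderiv ℝ f) x u v := hkey u v
      _ = fderiv ℝ (fderiv ℝ f) x v u := hsnd u v
      _ = ⟪u, T v⟫ := (hkey v u).symm
      _ = ⟪T v, u⟫ := real_inner_comm _ _
  have hent : ∀ i j, M i j = M j i := by
    intro i j
    have := hinner (WithLp.toLp 2 (Pi.single j 1))
      (WithLp.toLp 2 (Pi.single i 1))
    rw [show T = (Matrix.toEuclideanCLM (𝕜 := ℝ) M : E →L[ℝ] E) from rfl] at this
    rw [Matrix.toEuclideanCLM_toLp, Matrix.toEuclideanCLM_toLp] at this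
    simpa [PiLp.inner_apply, RCLike.inner_apply, Matrix.mulVec_single,
      Pi.single_apply, Finset.mul_sum, mul_ite] using this
  show Mᴴ = M
  ext i j
  simp [Matrix.conjTranspose_apply, hent i j]

end Aux

lemma AAt_isUnit_det {m n : ℕ} (A : Matrix (Fin m) (Fin n) ℝ) (hA : A.rank = m) :
    IsUnit (A * Aᵀ).det := by
  have h1 : (A * Aᵀ).rank = m := by rw [Matrix.rank_self_mul_transpose, hA]
  rw [Matrix.rank] at h1
  have h2 : LinearMap.range (Matrix.mulVecLin (A * Aᵀ)) = ⊤ := by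
    apply Submodule.eq_top_of_finrank_eq
    rw [h1]
    simp [Module.finrank_pi]
  have h3 : Function.Surjective (A * Aᵀ).mulVec := by
    have hs := LinearMap.range_eq_top.mp h2
    intro y
    obtain ⟨x, hx⟩ := hs y
    exact ⟨x, by rw [← Matrix.mulVecLin_apply]; exact hx⟩
  exact (Matrix.isUnit_iff_isUnit_det _).mp (Matrix.mulVec_surjective_iff_isUnit.mp h3)

lemma proj_transpose {m n : ℕ} (A : Matrix (Fin m) (Fin n) ℝ)
    (P : Matrix (Fin n) (Fin n) ℝ) (hP : P = 1 - Aᵀ * (A * Aᵀ)⁻¹ * A) : Pᵀ = P := by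
  rw [hP]
  simp [Matrix.transpose_sub, Matrix.transpose_one, Matrix.transpose_mul,
    Matrix.transpose_transpose, Matrix.transpose_nonsing_inv, Matrix.mul_assoc]

lemma proj_idem {m n : ℕ} (A : Matrix (Fin m) (Fin n) ℝ) (hdet : IsUnit (A * Aᵀ).det)
    (P : Matrix (Fin n) (Fin n) ℝ) (hP : P = 1 - Aᵀ * (A * Aᵀ)⁻¹ * A) : P * P = P := by
  have hAAt : A * Aᵀ * (A * Aᵀ)⁻¹ = 1 := Matrix.mul_nonsing_inv _ hdet
  have hmid : A * (Aᵀ * ((A * Aᵀ)⁻¹ * A)) = A := by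
    simp only [← Matrix.mul_assoc]
    rw [hAAt, Matrix.one_mul]
  rw [hP]
  simp only [Matrix.sub_mul, Matrix.mul_sub, Matrix.one_mul, Matrix.mul_one]
  rw [show Aᵀ * (A * Aᵀ)⁻¹ * A * (Aᵀ * (A * Aᵀ)⁻¹ * A) = Aᵀ * (A * Aᵀ)⁻¹ * A from by
    simp only [Matrix.mul_assoc]; rw [hmid]]
  abel

set_option maxHeartbeats 1000000

/-- Lemma 2 of the paper: under the semi-implicit continuation method with
trust-region time-stepping, if the projected gradients satisfy
`0 < δ ≤ ‖p_{g_k}‖ ≤ M_p` for all `k` and the Hessian of `f` is uniformly bounded by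
`M_G`, then the time-stepping lengths are bounded away from zero:
there exists `δ_Δt > 0` with `Δt_k ≥ δ_Δt` for all `k`. -/
theorem stmt_12 {m n : ℕ}
    (ηa η₁ η₂ γ₁ γ₂ : ℝ)
    (hηa : 0 < ηa) (hηaη₁ : ηa < η₁) (hη₁ : η₁ ≤ 1 / 2)
    (hη₂ : 1 / 2 < η₂) (hη₂1 : η₂ < 1)
    (hγ₂0 : 0 < γ₂) (hγ₂1 : γ₂ < 1) (hγ₁ : 1 < γ₁)
    (δ Mp MG : ℝ) (hδ : 0 < δ) (hδMp : δ ≤ Mp) (hMG : 0 < MG)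
    (f : EuclideanSpace ℝ (Fin n) → ℝ) (hf : ContDiff ℝ 2 f)
    (hHess : ∀ x : EuclideanSpace ℝ (Fin n), ‖fderiv ℝ (gradient f) x‖ ≤ MG)
    (A : Matrix (Fin m) (Fin n) ℝ) (hA : A.rank = m) (b : Fin m → ℝ)
    (P : Matrix (Fin n) (Fin n) ℝ) (hP : P = 1 - Aᵀ * (A * Aᵀ)⁻¹ * A)
    (s : ℕ → EuclideanSpace ℝ (Fin n)) (hs : ∀ k, A.mulVec (s k) = b)
    (Δt : ℕ → ℝ) (hΔt : ∀ k, 0 < Δt k)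
    (g : ℕ → EuclideanSpace ℝ (Fin n)) (hg : ∀ k, g k = gradient f (s k))
    (G : ℕ → Matrix (Fin n) (Fin n) ℝ)
    (hG : ∀ k, HasFDerivAt (gradient f)
      (Matrix.toEuclideanCLM (𝕜 := ℝ) (G k) : _) (s k))
    (pg : ℕ → EuclideanSpace ℝ (Fin n)) (hpg : ∀ k, pg k = toE (P.mulVec (g k)))
    (hbd : ∀ k, δ ≤ ‖pg k‖ ∧ ‖pg k‖ ≤ Mp)
    (d : ℕ → EuclideanSpace ℝ (Fin n)) (ρ : ℕ → ℝ)
    (q : ℕ → EuclideanSpace ℝ (Fin n) → ℝ)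
    (hq : ∀ k, ∀ x : EuclideanSpace ℝ (Fin n),
      q k x = (x - s k) ⬝ᵥ toPi (g k) +
        (1 / 2) * ((x - s k) ⬝ᵥ (G k).mulVec (x - s k)))
    (hstep : ∀ k,
      (((1 / Δt k) • (1 : Matrix (Fin n) (Fin n) ℝ) + G k).PosDef ∧
        ((1 / Δt k) • (1 : Matrix (Fin n) (Fin n) ℝ) + G k - Pᵀ * G k * P).PosDef) →
      ((1 / Δt k) • (1 : Matrix (Fin n) (Fin n) ℝ) + G k).mulVec (d k) = -(pg k) ∧
      ρ k = (f (s k) - f (s k + toE (P.mulVec (d k)))) /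
            (q k (s k) - q k (s k + toE (P.mulVec (d k)))))
    (hstep' : ∀ k,
      ¬(((1 / Δt k) • (1 : Matrix (Fin n) (Fin n) ℝ) + G k).PosDef ∧
        ((1 / Δt k) • (1 : Matrix (Fin n) (Fin n) ℝ) + G k - Pᵀ * G k * P).PosDef) →
      ρ k = -1)
    (hupdate : ∀ k, Δt (k + 1) =
      if |1 - ρ k| ≤ η₁ then γ₁ * Δt k
      else if |1 - ρ k| < η₂ then Δt k
      else γ₂ * Δt k) :
    ∃ δΔt > 0, ∀ k, δΔt ≤ Δt k := by
  classical
  have hη₁pos : 0 < η₁ := lt_trans hηa hηaη₁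
  set ε := η₁ / (3 * MG) with hε
  have hεpos : 0 < ε := by positivity
  -- projection facts
  have hdet : IsUnit (A * Aᵀ).det := AAt_isUnit_det A hA
  have hPt : Pᵀ = P := proj_transpose A P hP
  have hPP : P * P = P := proj_idem A hdet P hP
  -- Hessian operator norm bound
  have hGnorm : ∀ k, ‖(Matrix.toEuclideanCLM (𝕜 := ℝ) (G k) :
      EuclideanSpace ℝ (Fin n) →L[ℝ] EuclideanSpace ℝ (Fin n))‖ ≤ MG := by
    intro k
    have h1 := (hG k).fderiv
    have h2 := hHess (s k)
    rw [h1] at h2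
    exact h2
  have key : ∀ k, Δt k ≤ ε → |1 - ρ k| ≤ η₁ := by
    intro k hk
    have htpos : 0 < Δt k := hΔt k
    set t := Δt k with ht'
    have hmgt : 3 * MG * t ≤ η₁ := by
      rw [hε] at hk
      have := (le_div_iff₀ (by positivity : (0:ℝ) < 3 * MG)).mp hk
      linarith
    have h6 : 6 * MG ≤ 1 / t := by
      rw [le_div_iff₀ htpos]
      nlinarith
    have h3η : 3 * MG ≤ η₁ * (1 / t) := by
      rw [mul_one_div, le_div_iff₀ htpos]
      nlinarith
    set B := (1 / t) • (1 : Matrix (Fin n) (Fin n) ℝ) + G k with hB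
    have hquadG : ∀ x : Fin n → ℝ, |x ⬝ᵥ (G k).mulVec x| ≤ MG * ‖toE x‖ ^ 2 :=
      quad_bound_s12 (hGnorm k)
    have hBmul : ∀ x : Fin n → ℝ, B.mulVec x = (1 / t) • x + (G k).mulVec x := by
      intro x
      rw [hB, Matrix.add_mulVec, Matrix.smul_mulVec, Matrix.one_mulVec]
    have hBquad : ∀ x : Fin n → ℝ,
        x ⬝ᵥ B.mulVec x = (1 / t) * ‖toE x‖ ^ 2 + x ⬝ᵥ (G k).mulVec x := by
      intro x
      rw [hBmul, dotProduct_add, dotProduct_smul, smul_eq_mul, euclid_norm_sq]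
    have hBlow : ∀ x : Fin n → ℝ, (1 / t - MG) * ‖toE x‖ ^ 2 ≤ x ⬝ᵥ B.mulVec x := by
      intro x
      have h1 := abs_le.mp (hquadG x)
      rw [hBquad]
      nlinarith [h1.1]
    have hGherm : (G k).IsHermitian := hess_symm hf (hG k)
    have hct : ∀ (M : Matrix (Fin n) (Fin n) ℝ), Mᴴ = Mᵀ := by
      intro M; ext i j; simp [Matrix.conjTranspose_apply]
    have hGt : (G k)ᵀ = G k := by rw [← hct]; exact hGherm.eq
    have hBherm : B.IsHermitian := by
      show Bᴴ = B
      rw [hB]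
      simp [Matrix.conjTranspose_add, Matrix.conjTranspose_smul,
        Matrix.conjTranspose_one, hGherm.eq, hGt]
    have hnormpos : ∀ x : Fin n → ℝ, x ≠ 0 → 0 < ‖toE x‖ := by
      intro x hx
      rw [norm_pos_iff]
      exact fun h => hx (by simpa [toE] using h)
    have hBpos : B.PosDef := by
      refine Matrix.PosDef.of_dotProduct_mulVec_pos hBherm (fun x hx => ?_)
      have hxn := hnormpos x hx
      have hst : star x = x := by funext i; simp
      rw [hst]
      calc (0:ℝ) < (1 / t - MG) * ‖toE x‖ ^ 2 :=
            mul_pos (by nlinarith) (pow_pos hxn 2)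
        _ ≤ x ⬝ᵥ B.mulVec x := hBlow x
    have hQquad : ∀ x : Fin n → ℝ,
        x ⬝ᵥ (Pᵀ * G k * P).mulVec x = (P.mulVec x) ⬝ᵥ (G k).mulVec (P.mulVec x) := by
      intro x
      have h1 : (Pᵀ * G k * P).mulVec x = Pᵀ.mulVec ((G k).mulVec (P.mulVec x)) := by
        rw [Matrix.mulVec_mulVec, Matrix.mulVec_mulVec, Matrix.mul_assoc]
      rw [h1, Matrix.dotProduct_mulVec, Matrix.vecMul_transpose]
    have hQbound : ∀ x : Fin n → ℝ,
        |x ⬝ᵥ (Pᵀ * G k * P).mulVec x| ≤ MG * ‖toE x‖ ^ 2 := by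
      intro x
      rw [hQquad]
      have h1 := hquadG (P.mulVec x)
      have h2 := proj_norm_le hPt hPP x
      have h3 : MG * ‖toE (P.mulVec x)‖ ^ 2 ≤ MG * ‖toE x‖ ^ 2 := by
        gcongr
      exact h1.trans h3
    have hQherm : (Pᵀ * G k * P).IsHermitian := by
      show (Pᵀ * G k * P)ᴴ = Pᵀ * G k * P
      rw [hct, Matrix.transpose_mul, Matrix.transpose_mul, Matrix.transpose_transpose]
      rw [hGt, hPt, Matrix.mul_assoc]
    have hBQpos : (B - Pᵀ * G k * P).PosDef := by
      refine Matrix.PosDef.of_dotProduct_mulVec_pos (hBherm.sub hQherm) (fun x hx => ?_)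
      have hxn := hnormpos x hx
      have hst : star x = x := by funext i; simp
      rw [hst, Matrix.sub_mulVec, dotProduct_sub]
      have h1 := hBlow x
      have h2 := abs_le.mp (hQbound x)
      nlinarith [h2.2, mul_pos (show (0:ℝ) < 1 / t - 2 * MG by nlinarith) (pow_pos hxn 2)]
    obtain ⟨hd, hρ⟩ := hstep k ⟨hBpos, hBQpos⟩
    set v := P.mulVec (d k) with hv
    have hdne : d k ≠ 0 := by
      intro h0
      have hd0 : B.mulVec (d k) = 0 := by rw [h0]; exact Matrix.mulVec_zero _
      rw [hd0] at hd
      have hpg0 : pg k = 0 := by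
        have := hd.symm
        simpa [neg_eq_zero] using this
      have hδk := (hbd k).1
      rw [hpg0, norm_zero] at hδk
      linarith
    have hBd : (d k) ⬝ᵥ B.mulVec (d k) = -((d k) ⬝ᵥ toPi (pg k)) := by
      rw [hd]
      exact dotProduct_neg _ _
    have hnd : 0 < ‖toE (d k)‖ := by
      apply hnormpos
      exact fun h => hdne (by simpa using h)
    have hq0 : q k (s k) = 0 := by
      rw [hq]
      simp
    have hqv : q k (s k + toE v)
        = v ⬝ᵥ toPi (g k) + 1 / 2 * (v ⬝ᵥ (G k).mulVec v) := by
      rw [hq, add_sub_cancel_left]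
      simp [toE]
    have hpg' : toPi (pg k) = P.mulVec (toPi (g k)) := by
      rw [hpg k]
      rfl
    have hPg : v ⬝ᵥ toPi (g k) = (d k) ⬝ᵥ toPi (pg k) := by
      rw [hv, dotProduct_comm, Matrix.dotProduct_mulVec, ← Matrix.mulVec_transpose,
        hPt, ← hpg', dotProduct_comm]
    have hquadv := abs_le.mp (hquadG v)
    have hprojv : ‖toE v‖ ≤ ‖toE (d k)‖ := by
      rw [hv]
      exact proj_norm_le hPt hPP _
    set den := q k (s k) - q k (s k + toE v) with hden
    have hdenval : den = (d k) ⬝ᵥ B.mulVec (d k) - 1 / 2 * (v ⬝ᵥ (G k).mulVec v) := by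
      rw [hden, hq0, hqv, hPg, hBd]
      ring
    have hBdlow := hBlow ((d k))
    have hdenlow : (1 / t - 3 / 2 * MG) * ‖toE (d k)‖ ^ 2 ≤ den := by
      rw [hdenval]
      have h2 := hquadv.2
      have h3 : MG * ‖toE v‖ ^ 2 ≤ MG * ‖toE (d k)‖ ^ 2 := by gcongr
      nlinarith
    have hdenpos : 0 < den :=
      lt_of_lt_of_le (mul_pos (by nlinarith) (pow_pos hnd 2)) hdenlow
    have htay := taylor_bound hMG.le hf hHess (s k) (toE v)
    have hZ : v ⬝ᵥ toPi (g k) = (inner ℝ (gradient f (s k)) (toE v) : ℝ) := by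
      rw [dot_eq_inner]
      have h1 : toE (toPi (g k)) = g k := rfl
      rw [h1, hg k, real_inner_comm]
    have hnum_den : |(f (s k) - f (s k + toE v)) - den|
        ≤ 3 / 2 * MG * ‖toE (d k)‖ ^ 2 := by
      have hds : den = -(v ⬝ᵥ toPi (g k)) - 1 / 2 * (v ⬝ᵥ (G k).mulVec v) := by
        rw [hden, hq0, hqv]
        ring
      have hexp : (f (s k) - f (s k + toE v)) - den
          = -(f (s k + toE v) - f (s k) - (inner ℝ (gradient f (s k)) (toE v) : ℝ))
            + 1 / 2 * (v ⬝ᵥ (G k).mulVec v) := by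
        rw [hds, ← hZ]
        ring
      rw [hexp]
      have h2 : |1 / 2 * (v ⬝ᵥ (G k).mulVec v)| ≤ 1 / 2 * (MG * ‖toE v‖ ^ 2) := by
        rw [abs_mul]
        have : |(1:ℝ) / 2| = 1 / 2 := by norm_num
        rw [this]
        have := hquadG v
        linarith
      calc |-(f (s k + toE v) - f (s k) - (inner ℝ (gradient f (s k)) (toE v) : ℝ))
            + 1 / 2 * (v ⬝ᵥ (G k).mulVec v)|
          ≤ |-(f (s k + toE v) - f (s k) - (inner ℝ (gradient f (s k)) (toE v) : ℝ))|
            + |1 / 2 * (v ⬝ᵥ (G k).mulVec v)| := abs_add_le _ _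
        _ = |f (s k + toE v) - f (s k) - (inner ℝ (gradient f (s k)) (toE v) : ℝ)|
            + |1 / 2 * (v ⬝ᵥ (G k).mulVec v)| := by rw [abs_neg]
        _ ≤ MG * ‖toE v‖ ^ 2 + 1 / 2 * (MG * ‖toE v‖ ^ 2) := add_le_add htay h2
        _ ≤ 3 / 2 * MG * ‖toE (d k)‖ ^ 2 := by
            have h4 : MG * ‖toE v‖ ^ 2 ≤ MG * ‖toE (d k)‖ ^ 2 := by gcongr
            linarith
    rw [hρ]
    have hfrac : 1 - (f (s k) - f (s k + toE v)) / den
        = (den - (f (s k) - f (s k + toE v))) / den := by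
      field_simp
    rw [hfrac, abs_div, abs_of_pos hdenpos, div_le_iff₀ hdenpos]
    rw [abs_sub_comm]
    have hsc : 3 / 2 * MG ≤ η₁ * (1 / t - 3 / 2 * MG) := by
      nlinarith [h3η, mul_nonneg hMG.le (by linarith : (0:ℝ) ≤ 1 - η₁)]
    have h9 := mul_le_mul_of_nonneg_right hsc (pow_nonneg (norm_nonneg (toE (d k))) 2)
    have h10 := mul_le_mul_of_nonneg_left hdenlow hη₁pos.le
    calc |(f (s k) - f (s k + toE v)) - den| ≤ 3 / 2 * MG * ‖toE (d k)‖ ^ 2 := hnum_den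
      _ ≤ η₁ * ((1 / t - 3 / 2 * MG) * ‖toE (d k)‖ ^ 2) := by nlinarith [h9]
      _ ≤ η₁ * den := h10
  -- each step multiplies by at least γ₂
  have low : ∀ k, γ₂ * Δt k ≤ Δt (k + 1) := by
    intro k
    rw [hupdate k]
    have h0 := hΔt k
    split_ifs
    · exact mul_le_mul_of_nonneg_right (by linarith) h0.le
    · exact mul_le_of_le_one_left h0.le hγ₂1.le
    · exact le_rfl
  refine ⟨min (Δt 0) (γ₂ * ε), lt_min (hΔt 0) (by positivity), ?_⟩
  intro k
  induction k with
  | zero => exact min_le_left _ _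
  | succ k ih =>
    by_cases hk : Δt k ≤ ε
    · have h1 := key k hk
      rw [hupdate k, if_pos h1]
      have h0 := hΔt k
      calc min (Δt 0) (γ₂ * ε) ≤ Δt k := ih
        _ ≤ γ₁ * Δt k := le_mul_of_one_le_left h0.le hγ₁.le
    · push_neg at hk
      calc min (Δt 0) (γ₂ * ε) ≤ γ₂ * ε := min_le_right _ _
        _ ≤ γ₂ * Δt k := mul_le_mul_of_nonneg_left hk.le hγ₂0.le
        _ ≤ Δt (k + 1) := low k
end
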